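/- Let δ > 0 and let θ_k, θ̂ be real numbers with 0 < θ_k < θ̂ ≤ π/2. Define G(t) = 2√δ · arctan(√δ · t) − ln(1 + δ·t²)/t for t > 0. Then ∫_0^{θ_k} ln(1 + δ · sin²(θ̂ − θ)) · cos(θ̂ − θ)/sin²(θ̂ − θ) dθ = G(sin θ̂) − G(sin(θ̂ − θ_k)). -/

import Mathlib

open Real Set intervalIntegral

/- The integrand is `g(sin(θ̂ − θ)) · cos(θ̂ − θ)` with `g(t) = ln(1 + δt²)/t²`, so the substitution
`t = sin(θ̂ − θ)` reduces the claim to `G' = g` on `t > 0`: differentiating `G`, the arctan term and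
the `2δt/(1 + δt²)` part of the quotient rule cancel, leaving `ln(1 + δt²)/t²`. -/

noncomputable def logSqAntideriv (δ t : ℝ) : ℝ :=
  2 * √δ * arctan (√δ * t) - log (1 + δ * t ^ 2) / t

theorem hasDerivAt_logSqAntideriv {δ t : ℝ} (hδ : 0 ≤ δ) (ht : t ≠ 0) :
    HasDerivAt (logSqAntideriv δ) (log (1 + δ * t ^ 2) / t ^ 2) t := by
  have hpos : 0 < 1 + δ * t ^ 2 := by positivity
  have harctan : HasDerivAt (fun t => arctan (√δ * t)) (1 / (1 + (√δ * t) ^ 2) * √δ) t := by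
    simpa using ((hasDerivAt_id t).const_mul √δ).arctan
  have hlog : HasDerivAt (fun t => log (1 + δ * t ^ 2)) (δ * (2 * t) / (1 + δ * t ^ 2)) t := by
    simpa using (((hasDerivAt_pow 2 t).const_mul δ).const_add 1).log hpos.ne'
  refine ((harctan.const_mul (2 * √δ)).sub (hlog.div (hasDerivAt_id' t) ht)).congr_deriv ?_
  rw [mul_pow, sq_sqrt hδ]
  field_simp
  rw [sq_sqrt hδ]
  ring

theorem integral_comp_sin_sub_mul_cos {G g : ℝ → ℝ} {c a b : ℝ}
    (hG : ∀ θ ∈ uIcc a b, HasDerivAt G (g (sin (c - θ))) (sin (c - θ)))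
    (hg : ContinuousOn (fun θ => g (sin (c - θ))) (uIcc a b)) :
    ∫ θ in a..b, g (sin (c - θ)) * cos (c - θ) = G (sin (c - a)) - G (sin (c - b)) := by
  have hderiv : ∀ θ ∈ uIcc a b,
      HasDerivAt (fun θ => -G (sin (c - θ))) (g (sin (c - θ)) * cos (c - θ)) θ := by
    intro θ hθ
    have hsin : HasDerivAt (fun θ => sin (c - θ)) (-cos (c - θ)) θ := by
      simpa using ((hasDerivAt_id θ).const_sub c).sin
    exact ((hG θ hθ).comp θ hsin).neg.congr_deriv (by ring)
  rw [integral_eq_sub_of_hasDerivAt hderiv (hg.mul (by fun_prop)).intervalIntegrable]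
  ring

/-- Theorem 2 (α = 2 case, equations (18), (15), (16)):
`∫_0^{θ_k} ln(1 + δ sin²(θ̂ − θ)) cos(θ̂ − θ)/sin²(θ̂ − θ) dθ = G(sin θ̂) − G(sin(θ̂ − θ_k))`
where `G(t) = 2√δ arctan(√δ t) − ln(1 + δt²)/t`. -/
theorem stmt_9 (δ θk θhat : ℝ) (hδ : 0 < δ)
    (hθk : 0 < θk) (hlt : θk < θhat) (hθhat : θhat ≤ π / 2)
    (G : ℝ → ℝ)
    (hG : ∀ t : ℝ, 0 < t →
      G t = 2 * Real.sqrt δ * arctan (Real.sqrt δ * t) - Real.log (1 + δ * t ^ 2) / t) :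
    ∫ θ in (0 : ℝ)..θk,
        Real.log (1 + δ * sin (θhat - θ) ^ 2) * (cos (θhat - θ) / sin (θhat - θ) ^ 2) =
      G (sin θhat) - G (sin (θhat - θk)) := by
  have hsin_pos : ∀ θ ∈ uIcc 0 θk, 0 < sin (θhat - θ) := by
    intro θ hθ
    rw [uIcc_of_le hθk.le] at hθ
    exact sin_pos_of_pos_of_lt_pi (by linarith [hθ.2]) (by linarith [hθ.1, pi_pos])
  have hcont : ContinuousOn (fun θ => log (1 + δ * sin (θhat - θ) ^ 2) / sin (θhat - θ) ^ 2)
      (uIcc 0 θk) := by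
    exact ContinuousOn.div (ContinuousOn.log (by fun_prop) fun θ _ => by positivity)
      (by fun_prop) fun θ hθ => (pow_pos (hsin_pos θ hθ) 2).ne'
  have h0 : 0 < sin θhat := by simpa using hsin_pos 0 left_mem_uIcc
  have hk : 0 < sin (θhat - θk) := hsin_pos θk right_mem_uIcc
  calc ∫ θ in (0 : ℝ)..θk,
        log (1 + δ * sin (θhat - θ) ^ 2) * (cos (θhat - θ) / sin (θhat - θ) ^ 2)
      = ∫ θ in (0 : ℝ)..θk,
          log (1 + δ * sin (θhat - θ) ^ 2) / sin (θhat - θ) ^ 2 * cos (θhat - θ) := by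
        simp only [mul_div_assoc', div_mul_eq_mul_div]
    _ = logSqAntideriv δ (sin (θhat - 0)) - logSqAntideriv δ (sin (θhat - θk)) :=
        integral_comp_sin_sub_mul_cos (g := fun t => log (1 + δ * t ^ 2) / t ^ 2)
          (fun θ hθ => hasDerivAt_logSqAntideriv hδ.le (hsin_pos θ hθ).ne') hcont
    _ = G (sin θhat) - G (sin (θhat - θk)) := by
        rw [sub_zero, hG _ h0, hG _ hk, logSqAntideriv, logSqAntideriv]
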